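/- arXiv:2009.04723 — 3 statements merged into one kernel-verified Lean document; each statement's English description precedes it below -/
import Mathlib

section
/- Let λ > 0 and let (y, z) ∈ ℝ² with (y, z) ≠ (0, 0). Then (1/(2π)) ∫_{-π/2}^{π/2} ∫_{-π/2}^{π/2} exp(i (2π/λ)(y cos θ sin φ + z sin θ)) cos θ dφ dθ = sin(2π √(y² + z²)/λ) / (2π √(y² + z²)/λ). In other words, the expectation of the plane-wave phase factor exp(i k(φ,θ)ᵀ v) over azimuth angle φ and elevation angle θ distributed with joint probability density f(φ,θ) = cos(θ)/(2π) on [-π/2, π/2]² equals sinc(2‖v‖/λ) for any displacement vector v = (0, y, z) lying in the plane of the surface. -/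
/-!
The weight `cos θ dφ dθ` on the square of angles is the surface measure of the hemisphere.
Projecting the hemisphere onto the `(y, z)`-plane turns it into the rotation-invariant measure
`(1 - |u|²)^(-1/2) du` on the unit disk, so a rotation may move `(y, z)` to `(0, r)` with
`r = √(y² + z²)`. Then the `φ`-integral is trivial, and substituting `t = sin θ` gives
`∫ exp(i c sin θ) cos θ dθ = ∫₋₁¹ exp(i c t) dt = 2 sin c / c`.
-/

open Real intervalIntegral
open MeasureTheory Set

noncomputable def planeRotation (α : ℝ) : ℝ × ℝ →L[ℝ] ℝ × ℝ :=
  (Matrix.toLin (.finTwoProd ℝ) (.finTwoProd ℝ)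
    !![cos α, -sin α; sin α, cos α]).toContinuousLinearMap

theorem planeRotation_apply (α : ℝ) (u : ℝ × ℝ) :
    planeRotation α u = (cos α * u.1 - sin α * u.2, sin α * u.1 + cos α * u.2) := by
  simp [planeRotation, Matrix.toLin_finTwoProd_apply, sub_eq_add_neg]

theorem det_planeRotation (α : ℝ) : (planeRotation α).det = 1 := by
  simp only [planeRotation, LinearMap.det_toContinuousLinearMap, LinearMap.det_toLin,
    Matrix.det_fin_two_of]
  linear_combination cos_sq_add_sin_sq α

theorem planeRotation_fst_sq_add_snd_sq (α : ℝ) (u : ℝ × ℝ) :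
    (planeRotation α u).1 ^ 2 + (planeRotation α u).2 ^ 2 = u.1 ^ 2 + u.2 ^ 2 := by
  rw [planeRotation_apply]
  linear_combination (u.1 ^ 2 + u.2 ^ 2) * cos_sq_add_sin_sq α

theorem planeRotation_neg_planeRotation (α : ℝ) (u : ℝ × ℝ) :
    planeRotation (-α) (planeRotation α u) = u := by
  simp only [planeRotation_apply, cos_neg, sin_neg]
  ext
  · linear_combination u.1 * cos_sq_add_sin_sq α
  · linear_combination u.2 * cos_sq_add_sin_sq α

def unitDisk : Set (ℝ × ℝ) := {u | u.1 ^ 2 + u.2 ^ 2 < 1}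

theorem measurableSet_unitDisk : MeasurableSet unitDisk :=
  measurableSet_lt (by fun_prop) measurable_const

theorem planeRotation_image_unitDisk (α : ℝ) : planeRotation α '' unitDisk = unitDisk := by
  ext u
  constructor
  · rintro ⟨v, hv, rfl⟩
    simpa [unitDisk, planeRotation_fst_sq_add_snd_sq] using hv
  · intro hu
    refine ⟨planeRotation (-α) u, ?_, by simpa using planeRotation_neg_planeRotation (-α) u⟩
    simpa [unitDisk, planeRotation_fst_sq_add_snd_sq] using hu

theorem setIntegral_comp_of_abs_det_eq_one {E F : Type*} [NormedAddCommGroup E]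
    [NormedSpace ℝ E] [FiniteDimensional ℝ E] [MeasurableSpace E] [BorelSpace E]
    [NormedAddCommGroup F] [NormedSpace ℝ F] (μ : Measure E) [μ.IsAddHaarMeasure] {s : Set E}
    (hs : MeasurableSet s) (L : E →L[ℝ] E) (hdet : |L.det| = 1) (hinj : InjOn L s)
    (hLs : L '' s = s) (g : E → F) :
    ∫ x in s, g (L x) ∂μ = ∫ x in s, g x ∂μ := by
  conv_rhs => rw [← hLs]
  rw [integral_image_eq_integral_abs_det_fderiv_smul μ hs
    (fun x _ => L.hasFDerivAt.hasFDerivWithinAt) hinj, hdet]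
  simp only [one_smul]

theorem setIntegral_unitDisk_comp_planeRotation {F : Type*} [NormedAddCommGroup F]
    [NormedSpace ℝ F] (α : ℝ) (g : ℝ × ℝ → F) :
    ∫ u in unitDisk, g (planeRotation α u) = ∫ u in unitDisk, g u :=
  setIntegral_comp_of_abs_det_eq_one volume measurableSet_unitDisk _
    (by rw [det_planeRotation, abs_one])
    ((Function.LeftInverse.injective (planeRotation_neg_planeRotation α)).injOn)
    (planeRotation_image_unitDisk α) g

def angleSquare : Set (ℝ × ℝ) := Ioo (-(π / 2)) (π / 2) ×ˢ Ioo (-(π / 2)) (π / 2)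

theorem measurableSet_angleSquare : MeasurableSet angleSquare :=
  measurableSet_Ioo.prod measurableSet_Ioo

/-- For `p = (θ, φ)`, the `(y, z)`-components of the unit vector `k(φ, θ) / ‖k(φ, θ)‖`. -/
noncomputable def hemisphereProj (p : ℝ × ℝ) : ℝ × ℝ := (cos p.1 * sin p.2, sin p.1)

noncomputable def fderivHemisphereProj (p : ℝ × ℝ) : ℝ × ℝ →L[ℝ] ℝ × ℝ :=
  (Matrix.toLin (.finTwoProd ℝ) (.finTwoProd ℝ)
    !![-sin p.1 * sin p.2, cos p.1 * cos p.2; cos p.1, 0]).toContinuousLinearMap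

@[fun_prop]
theorem continuous_hemisphereProj : Continuous hemisphereProj := by
  unfold hemisphereProj
  fun_prop

theorem hasFDerivAt_hemisphereProj (p : ℝ × ℝ) :
    HasFDerivAt hemisphereProj (fderivHemisphereProj p) p := by
  unfold fderivHemisphereProj
  rw [Matrix.toLin_finTwoProd_toContinuousLinearMap]
  refine (HasFDerivAt.prodMk
      (((hasDerivAt_cos p.1).comp_hasFDerivAt p hasFDerivAt_fst).mul
        ((hasDerivAt_sin p.2).comp_hasFDerivAt p hasFDerivAt_snd))
      ((hasDerivAt_sin p.1).comp_hasFDerivAt p hasFDerivAt_fst)).congr_fderiv ?_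
  ext <;> simp [mul_comm]

theorem det_fderivHemisphereProj (p : ℝ × ℝ) :
    (fderivHemisphereProj p).det = -(cos p.1 ^ 2 * cos p.2) := by
  simp only [fderivHemisphereProj, LinearMap.det_toContinuousLinearMap, LinearMap.det_toLin,
    Matrix.det_fin_two_of]
  ring

theorem injOn_hemisphereProj : InjOn hemisphereProj angleSquare := by
  rintro ⟨θ, φ⟩ ⟨hθ, hφ⟩ ⟨θ', φ'⟩ ⟨hθ', hφ'⟩ h
  simp only [hemisphereProj, Prod.mk.injEq] at h
  have hθθ' : θ = θ' := injOn_sin (Ioo_subset_Icc_self hθ) (Ioo_subset_Icc_self hθ') h.2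
  subst hθθ'
  have hφφ' : φ = φ' := injOn_sin (Ioo_subset_Icc_self hφ) (Ioo_subset_Icc_self hφ')
    (mul_left_cancel₀ (cos_pos_of_mem_Ioo hθ).ne' h.1)
  rw [hφφ']

theorem one_sub_hemisphereProj_sq (p : ℝ × ℝ) :
    1 - ((hemisphereProj p).1 ^ 2 + (hemisphereProj p).2 ^ 2) = (cos p.1 * cos p.2) ^ 2 := by
  simp only [hemisphereProj]
  linear_combination (-1 : ℝ) * sin_sq_add_cos_sq p.1 - cos p.1 ^ 2 * sin_sq_add_cos_sq p.2

theorem hemisphereProj_image_angleSquare : hemisphereProj '' angleSquare = unitDisk := by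
  ext u
  constructor
  · rintro ⟨p, ⟨hθ, hφ⟩, rfl⟩
    have hsq := one_sub_hemisphereProj_sq p
    have hpos : 0 < cos p.1 * cos p.2 := mul_pos (cos_pos_of_mem_Ioo hθ) (cos_pos_of_mem_Ioo hφ)
    show (hemisphereProj p).1 ^ 2 + (hemisphereProj p).2 ^ 2 < 1
    nlinarith
  · intro hu
    have hu : u.1 ^ 2 + u.2 ^ 2 < 1 := hu
    have hu₂ : -1 < u.2 ∧ u.2 < 1 := abs_lt.1 (by rw [← sq_lt_one_iff_abs_lt_one]; nlinarith)
    set c := √(1 - u.2 ^ 2)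
    have hc : 0 < c := sqrt_pos.2 (by nlinarith)
    have hu₁ : -1 < u.1 / c ∧ u.1 / c < 1 := by
      rw [← abs_lt, ← sq_lt_one_iff_abs_lt_one, div_pow, sq_sqrt (by nlinarith),
        div_lt_one (by nlinarith)]
      linarith
    have hcos : cos (arcsin u.2) = c := cos_arcsin u.2
    refine ⟨(arcsin u.2, arcsin (u.1 / c)), ⟨?_, ?_⟩, ?_⟩
    · exact ⟨neg_pi_div_two_lt_arcsin.2 hu₂.1, arcsin_lt_pi_div_two.2 hu₂.2⟩
    · exact ⟨neg_pi_div_two_lt_arcsin.2 hu₁.1, arcsin_lt_pi_div_two.2 hu₁.2⟩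
    · simp only [hemisphereProj, hcos, sin_arcsin hu₁.1.le hu₁.2.le,
        sin_arcsin hu₂.1.le hu₂.2.le]
      rw [mul_div_cancel₀ _ hc.ne']

theorem setIntegral_unitDisk_eq_setIntegral_angleSquare {F : Type*} [NormedAddCommGroup F]
    [NormedSpace ℝ F] (g : ℝ × ℝ → F) :
    ∫ u in unitDisk, (√(1 - (u.1 ^ 2 + u.2 ^ 2)))⁻¹ • g u =
      ∫ p in angleSquare, cos p.1 • g (hemisphereProj p) := by
  rw [← hemisphereProj_image_angleSquare, integral_image_eq_integral_abs_det_fderiv_smul volume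
    measurableSet_angleSquare (fun p _ => (hasFDerivAt_hemisphereProj p).hasFDerivWithinAt)
    injOn_hemisphereProj]
  refine setIntegral_congr_fun measurableSet_angleSquare fun p ⟨hθ, hφ⟩ => ?_
  have hθ := cos_pos_of_mem_Ioo hθ
  have hφ := cos_pos_of_mem_Ioo hφ
  rw [det_fderivHemisphereProj, one_sub_hemisphereProj_sq, sqrt_sq (by positivity), smul_smul,
    abs_neg, abs_of_pos (by positivity)]
  congr 1
  field_simp

theorem setIntegral_angleSquare_comp_planeRotation {F : Type*} [NormedAddCommGroup F]
    [NormedSpace ℝ F] (α : ℝ) (g : ℝ × ℝ → F) :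
    ∫ p in angleSquare, cos p.1 • g (planeRotation α (hemisphereProj p)) =
      ∫ p in angleSquare, cos p.1 • g (hemisphereProj p) := by
  calc
    _ = ∫ u in unitDisk, (√(1 - (u.1 ^ 2 + u.2 ^ 2)))⁻¹ • g (planeRotation α u) :=
      (setIntegral_unitDisk_eq_setIntegral_angleSquare _).symm
    _ = ∫ u in unitDisk, (√(1 - (u.1 ^ 2 + u.2 ^ 2)))⁻¹ • g u := by
      have h := setIntegral_unitDisk_comp_planeRotation α fun v ↦
        (√(1 - (v.1 ^ 2 + v.2 ^ 2)))⁻¹ • g v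
      simpa only [planeRotation_fst_sq_add_snd_sq α] using h
    _ = _ := setIntegral_unitDisk_eq_setIntegral_angleSquare g

theorem integral_integral_eq_setIntegral_Ioo_prod {E : Type*} [NormedAddCommGroup E]
    [NormedSpace ℝ E] {F : ℝ × ℝ → E} (hF : Continuous F) {a b c d : ℝ} (hab : a ≤ b)
    (hcd : c ≤ d) :
    ∫ x in a..b, ∫ y in c..d, F (x, y) = ∫ p in Ioo a b ×ˢ Ioo c d, F p := by
  have hint : IntegrableOn F (Ioo a b ×ˢ Ioo c d) (volume.prod volume) :=
    (hF.continuousOn.integrableOn_compact (isCompact_Icc.prod isCompact_Icc)).mono_set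
      (prod_mono Ioo_subset_Icc_self Ioo_subset_Icc_self)
  simp only [integral_of_le hab, integral_of_le hcd, integral_Ioc_eq_integral_Ioo]
  exact (setIntegral_prod F hint).symm

theorem integral_cexp_mul_sin_mul_cos {c : ℝ} (hc : c ≠ 0) :
    ∫ θ in -(π / 2)..π / 2, Complex.exp (Complex.I * ↑(c * sin θ)) * ↑(cos θ) =
      2 * ↑(sin c) / ↑c := by
  have hIc : Complex.I * c ≠ 0 := mul_ne_zero Complex.I_ne_zero (Complex.ofReal_ne_zero.2 hc)
  calc
    _ = ∫ θ in -(π / 2)..π / 2,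
          cos θ • ((fun t : ℝ ↦ Complex.exp (Complex.I * c * t)) ∘ sin) θ := by
      congr 1 with θ
      simp only [Function.comp_apply, Complex.real_smul, Complex.ofReal_mul]
      ring_nf
    _ = ∫ t in (-1)..1, Complex.exp (Complex.I * c * t) := by
      rw [integral_deriv_smul_comp (fun θ _ ↦ hasDerivAt_sin θ) continuousOn_cos (by fun_prop),
        sin_neg, sin_pi_div_two]
    _ = _ := by
      have hsin : Complex.exp (Complex.I * c) - Complex.exp (-(Complex.I * c)) =
          2 * Complex.sin c * Complex.I := by
        rw [mul_comm, ← neg_mul, Complex.exp_mul_I, Complex.exp_mul_I, Complex.cos_neg,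
          Complex.sin_neg]
        ring
      rw [integral_exp_mul_complex hIc, div_eq_div_iff hIc (Complex.ofReal_ne_zero.2 hc)]
      push_cast
      rw [mul_one, mul_neg_one]
      linear_combination c * hsin

theorem exists_eq_sqrt_mul_sin_and_eq_sqrt_mul_cos (y z : ℝ) :
    ∃ α, y = √(y ^ 2 + z ^ 2) * sin α ∧ z = √(y ^ 2 + z ^ 2) * cos α := by
  have hnorm : ‖(⟨z, y⟩ : ℂ)‖ = √(y ^ 2 + z ^ 2) := by
    rw [Complex.norm_def, Complex.normSq_mk]
    ring_nf
  refine ⟨Complex.arg ⟨z, y⟩, ?_, ?_⟩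
  · rw [← hnorm, Complex.norm_mul_sin_arg]
  · rw [← hnorm, Complex.norm_mul_cos_arg]

theorem integral_planeWave_hemisphere (a y z : ℝ) :
    ∫ θ in -(π / 2)..π / 2, ∫ φ in -(π / 2)..π / 2,
        Complex.exp (Complex.I * ↑(a * (y * cos θ * sin φ + z * sin θ))) * ↑(cos θ) =
      π * ∫ θ in -(π / 2)..π / 2,
        Complex.exp (Complex.I * ↑(a * √(y ^ 2 + z ^ 2) * sin θ)) * ↑(cos θ) := by
  obtain ⟨α, hy, hz⟩ := exists_eq_sqrt_mul_sin_and_eq_sqrt_mul_cos y z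
  set r := √(y ^ 2 + z ^ 2)
  let g : ℝ × ℝ → ℂ := fun v ↦ Complex.exp (Complex.I * ↑(a * r * v.2))
  have hpi : -(π / 2) ≤ π / 2 := by linarith [pi_pos]
  calc
    _ = ∫ p in angleSquare, cos p.1 • g (planeRotation α (hemisphereProj p)) := by
      rw [angleSquare, ← integral_integral_eq_setIntegral_Ioo_prod (by fun_prop) hpi hpi]
      refine integral_congr fun θ _ ↦ integral_congr fun φ _ ↦ ?_
      simp only [g, hemisphereProj, planeRotation_apply, Complex.real_smul, hy, hz]
      ring_nf
    _ = ∫ p in angleSquare, cos p.1 • g (hemisphereProj p) :=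
      setIntegral_angleSquare_comp_planeRotation α g
    _ = _ := by
      rw [angleSquare, ← integral_integral_eq_setIntegral_Ioo_prod (by fun_prop) hpi hpi]
      simp only [intervalIntegral.integral_const, g, hemisphereProj, Complex.real_smul]
      rw [← intervalIntegral.integral_const_mul]
      congr 1 with θ
      ring_nf

/-- With `f(φ,θ) = cos θ / (2π)` on `[-π/2, π/2]²`, for any `λ > 0`
and `(y, z) ≠ (0, 0)`,
`(1/(2π)) ∫∫ exp(i (2π/λ)(y cos θ sin φ + z sin θ)) cos θ dφ dθ
  = sin(2π √(y² + z²)/λ) / (2π √(y² + z²)/λ)`,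
i.e. the expected plane-wave phase factor equals `sinc(2 ‖v‖ / λ)` with `v = (0, y, z)`. -/
theorem stmt_0 (lam y z : ℝ) (hlam : 0 < lam) (hyz : (y, z) ≠ (0, 0)) :
    ((1 / (2 * Real.pi) : ℝ) : ℂ) *
      ∫ θ in (-(Real.pi / 2))..(Real.pi / 2),
        ∫ φ in (-(Real.pi / 2))..(Real.pi / 2),
          Complex.exp (Complex.I *
              ((2 * Real.pi / lam) * (y * Real.cos θ * Real.sin φ + z * Real.sin θ) : ℝ)) *
            ((Real.cos θ : ℝ) : ℂ)
      = ((Real.sin (2 * Real.pi * Real.sqrt (y ^ 2 + z ^ 2) / lam) /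
          (2 * Real.pi * Real.sqrt (y ^ 2 + z ^ 2) / lam) : ℝ) : ℂ) := by
  have hr : 0 < √(y ^ 2 + z ^ 2) := by
    rw [sqrt_pos]
    rw [Ne, Prod.mk.injEq, not_and_or] at hyz
    rcases hyz with hy | hz <;> positivity
  have hc : 2 * π / lam * √(y ^ 2 + z ^ 2) ≠ 0 := by positivity
  rw [integral_planeWave_hemisphere, integral_cexp_mul_sin_mul_cos hc]
  push_cast
  field_simp
end

section
/- Let (Ω, F, P) be a probability space. Let (Y_n)_{n≥1} be a sequence of nonnegative square-integrable random variables such that E[Y_n] = m for every n (for some constant m ≥ 0), Var(Y_n) ≤ C for every n (for some constant C), and for every ε > 0 there exists K such that |Cov(Y_i, Y_j)| ≤ ε whenever |i − j| ≥ K. Let D be a nonnegative integrable random variable. Then ((Σ_{n=1}^{N} Y_n + D) / N)² converges to m² in probability as N → ∞. -/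
open MeasureTheory ProbabilityTheory Filter Finset
open scoped ProbabilityTheory

/-- Covariance `Cov(X, Y) = E[X Y] − E[X] E[Y]` of real random variables on a
probability space. -/
noncomputable def cov {Ω : Type*} [MeasureSpace Ω] (X Y : Ω → ℝ) : ℝ :=
  (∫ ω, X ω * Y ω) - (∫ ω, X ω) * (∫ ω, Y ω)

/-!
Since `|Cov(Y_i, Y_j)| ≤ (Var Y_i + Var Y_j) / 2 ≤ C`, and `|Cov(Y_i, Y_j)| ≤ ε` once
`|i - j| ≥ K`, each row of the covariance matrix sums to at most `2 K C + ε N`; hence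
`Var(Y_1 + ⋯ + Y_N) ≤ N (2 K C + ε N)`, so the variance of the sample mean tends to `0` and
Chebyshev's inequality gives the weak law `(Y_1 + ⋯ + Y_N) / N → m` in probability.
Since `D / N → 0` pointwise, the claim follows because convergence in probability is
preserved by sums and by continuous maps.
-/

open scoped Topology

namespace MeasureTheory

variable {α ι E F : Type*} {mα : MeasurableSpace α} {μ : Measure α} {l : Filter ι}

lemma TendstoInMeasure.comp_of_continuousAt [PseudoMetricSpace E] [PseudoMetricSpace F]
    {f : ι → α → E} {c : E} {g : E → F} (hf : TendstoInMeasure μ f l fun _ ↦ c)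
    (hg : ContinuousAt g c) :
    TendstoInMeasure μ (fun i x ↦ g (f i x)) l fun _ ↦ g c := by
  rw [tendstoInMeasure_iff_dist] at hf ⊢
  intro ε hε
  obtain ⟨η, hη, hgη⟩ := Metric.continuousAt_iff.mp hg ε hε
  refine tendsto_of_tendsto_of_tendsto_of_le_of_le tendsto_const_nhds (hf η hη)
    (fun _ ↦ zero_le) fun i ↦ measure_mono fun x hx ↦ not_lt.mp fun h ↦ (hgη h).not_ge hx

lemma TendstoInMeasure.add [SeminormedAddCommGroup E] {f g : ι → α → E} {f₀ g₀ : α → E}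
    (hf : TendstoInMeasure μ f l f₀) (hg : TendstoInMeasure μ g l g₀) :
    TendstoInMeasure μ (fun i x ↦ f i x + g i x) l fun x ↦ f₀ x + g₀ x := by
  rw [tendstoInMeasure_iff_dist] at hf hg ⊢
  intro ε hε
  have hsplit : ∀ i, {x | ε ≤ dist (f i x + g i x) (f₀ x + g₀ x)} ⊆
      {x | ε / 2 ≤ dist (f i x) (f₀ x)} ∪ {x | ε / 2 ≤ dist (g i x) (g₀ x)} := by
    intro i x hx
    by_contra hnot
    simp only [Set.mem_union, Set.mem_ofPred_eq, not_or, not_le] at hx hnot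
    linarith [dist_add_add_le (f i x) (g i x) (f₀ x) (g₀ x)]
  have hsum := (hf (ε / 2) (half_pos hε)).add (hg (ε / 2) (half_pos hε))
  rw [add_zero] at hsum
  exact tendsto_of_tendsto_of_tendsto_of_le_of_le tendsto_const_nhds hsum
    (fun _ ↦ zero_le) fun i ↦ (measure_mono (hsplit i)).trans (measure_union_le _ _)

lemma tendstoInMeasure_const_of_tendsto_variance [IsFiniteMeasure μ] {X : ι → α → ℝ} {c : ℝ}
    (hX : ∀ i, MemLp (X i) 2 μ) (hmean : ∀ᶠ i in l, μ[X i] = c)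
    (hvar : Tendsto (fun i ↦ Var[X i; μ]) l (𝓝 0)) :
    TendstoInMeasure μ X l fun _ ↦ c := by
  rw [tendstoInMeasure_iff_dist]
  intro ε hε
  have hbound : Tendsto (fun i ↦ ENNReal.ofReal (Var[X i; μ] / ε ^ 2)) l (𝓝 0) := by
    simpa using ENNReal.tendsto_ofReal (hvar.div_const (ε ^ 2))
  refine tendsto_of_tendsto_of_tendsto_of_le_of_le' tendsto_const_nhds hbound
    (Eventually.of_forall fun _ ↦ zero_le) (hmean.mono fun i hi ↦ ?_)
  simpa only [Real.dist_eq, hi] using meas_ge_le_variance_div_sq (hX i) hε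

end MeasureTheory

namespace ProbabilityTheory

variable {Ω : Type*} {mΩ : MeasurableSpace Ω} {μ : Measure Ω}

lemma abs_covariance_le_half_add_variance [IsFiniteMeasure μ] {X Y : Ω → ℝ}
    (hX : MemLp X 2 μ) (hY : MemLp Y 2 μ) :
    |cov[X, Y; μ]| ≤ (Var[X; μ] + Var[Y; μ]) / 2 := by
  have hadd := variance_add hX hY
  have hsub := variance_sub hX hY
  have := variance_nonneg (X + Y) μ
  have := variance_nonneg (X - Y) μ
  rw [abs_le]
  constructor <;> linarith

lemma sum_le_of_abs_le_of_decay (s : Finset ℕ) (a : ℕ → ℝ) (i K : ℕ)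
    {C ε : ℝ} (hC : ∀ j, |a j| ≤ C) (hε : ∀ j : ℕ, K ≤ ((i : ℤ) - j).natAbs → |a j| ≤ ε) :
    ∑ j ∈ s, a j ≤ 2 * K * C + ε * #s := by
  classical
  have hC0 : 0 ≤ C := (abs_nonneg _).trans (hC 0)
  have hε0 : 0 ≤ ε := (abs_nonneg _).trans (hε (i + K) (by omega))
  set near := s.filter fun j : ℕ ↦ ((i : ℤ) - j).natAbs < K
  set far := s.filter fun j : ℕ ↦ ¬((i : ℤ) - j).natAbs < K
  have hnear_card : #near ≤ 2 * K := by
    have hsub : near ⊆ Icc (i + 1 - K) (i + K) := by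
      intro j hj
      simp only [near, mem_filter, mem_Icc] at hj ⊢
      omega
    calc #near ≤ #(Icc (i + 1 - K) (i + K)) := card_le_card hsub
      _ ≤ 2 * K := by rw [Nat.card_Icc]; omega
  have hnear : ∑ j ∈ near, a j ≤ 2 * K * C :=
    calc ∑ j ∈ near, a j ≤ #near • C :=
          sum_le_card_nsmul _ _ _ fun j _ ↦ (le_abs_self _).trans (hC j)
      _ ≤ 2 * K * C := by
        rw [nsmul_eq_mul]
        exact mul_le_mul_of_nonneg_right (by exact_mod_cast hnear_card) hC0
  have hfar : ∑ j ∈ far, a j ≤ ε * #s :=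
    calc ∑ j ∈ far, a j ≤ #far • ε := sum_le_card_nsmul _ _ _ fun j hj ↦
          (le_abs_self _).trans (hε j (not_lt.mp (mem_filter.mp hj).2))
      _ ≤ ε * #s := by
        rw [nsmul_eq_mul, mul_comm]
        exact mul_le_mul_of_nonneg_left (by exact_mod_cast card_filter_le _ _) hε0
  rw [← sum_filter_add_sum_filter_not s fun j : ℕ ↦ ((i : ℤ) - j).natAbs < K]
  linarith

variable [IsFiniteMeasure μ] {X : ℕ → Ω → ℝ} {C : ℝ}

lemma variance_sum_le_of_covariance_decay (hX : ∀ n, MemLp (X n) 2 μ)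
    (hvar : ∀ n, Var[X n; μ] ≤ C) {ε : ℝ} {K : ℕ}
    (hK : ∀ i j : ℕ, K ≤ ((i : ℤ) - j).natAbs → |cov[X i, X j; μ]| ≤ ε) (s : Finset ℕ) :
    Var[fun ω ↦ ∑ n ∈ s, X n ω; μ] ≤ #s * (2 * K * C + ε * #s) := by
  have hC : ∀ i j, |cov[X i, X j; μ]| ≤ C := fun i j ↦
    (abs_covariance_le_half_add_variance (hX i) (hX j)).trans (by linarith [hvar i, hvar j])
  rw [variance_fun_sum' fun n _ ↦ hX n]
  calc ∑ i ∈ s, ∑ j ∈ s, cov[X i, X j; μ] ≤ ∑ _i ∈ s, (2 * K * C + ε * #s) :=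
        sum_le_sum fun i _ ↦ sum_le_of_abs_le_of_decay s _ i K (hC i) (hK i)
    _ = #s * (2 * K * C + ε * #s) := by rw [sum_const, nsmul_eq_mul]

lemma tendsto_variance_average_of_covariance_decay (hX : ∀ n, MemLp (X n) 2 μ)
    (hvar : ∀ n, Var[X n; μ] ≤ C)
    (hdecay : ∀ ε > 0, ∃ K : ℕ, ∀ i j : ℕ, K ≤ ((i : ℤ) - j).natAbs → |cov[X i, X j; μ]| ≤ ε) :
    Tendsto (fun N : ℕ ↦ Var[fun ω ↦ (∑ n ∈ Icc 1 N, X n ω) / N; μ]) atTop (𝓝 0) := by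
  refine tendsto_order.2 ⟨fun a ha ↦ Eventually.of_forall fun N ↦ ha.trans_le
    (variance_nonneg _ _), fun a ha ↦ ?_⟩
  obtain ⟨K, hK⟩ := hdecay (a / 2) (half_pos ha)
  have hsmall := (tendsto_const_div_atTop_nhds_zero_nat (2 * K * C)).eventually
    (gt_mem_nhds (half_pos ha))
  filter_upwards [hsmall, eventually_gt_atTop 0] with N hN hN0
  have hNpos : (0 : ℝ) < N := Nat.cast_pos.mpr hN0
  have hsum := variance_sum_le_of_covariance_decay hX hvar hK (Icc 1 N)
  rw [Nat.card_Icc, Nat.add_sub_cancel] at hsum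
  simp_rw [div_eq_mul_inv _ (N : ℝ)]
  rw [variance_mul_const]
  calc Var[fun ω ↦ ∑ n ∈ Icc 1 N, X n ω; μ] * (N : ℝ)⁻¹ ^ 2
      ≤ N * (2 * K * C + a / 2 * N) * (N : ℝ)⁻¹ ^ 2 := by gcongr
    _ = 2 * K * C * (N : ℝ)⁻¹ + a / 2 := by field_simp
    _ < a := by rw [← div_eq_mul_inv]; linarith

theorem tendstoInMeasure_average_of_covariance_decay [IsProbabilityMeasure μ] {m : ℝ}
    (hX : ∀ n, MemLp (X n) 2 μ) (hmean : ∀ n, μ[X n] = m) (hvar : ∀ n, Var[X n; μ] ≤ C)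
    (hdecay : ∀ ε > 0, ∃ K : ℕ, ∀ i j : ℕ, K ≤ ((i : ℤ) - j).natAbs → |cov[X i, X j; μ]| ≤ ε) :
    TendstoInMeasure μ (fun (N : ℕ) ω ↦ (∑ n ∈ Icc 1 N, X n ω) / N) atTop fun _ ↦ m := by
  refine tendstoInMeasure_const_of_tendsto_variance
    (fun N ↦ by simpa only [div_eq_mul_inv] using
      (memLp_finsetSum _ fun n _ ↦ hX n).mul_const (N : ℝ)⁻¹) ?_
    (tendsto_variance_average_of_covariance_decay hX hvar hdecay)
  filter_upwards [eventually_gt_atTop 0] with N hN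
  have hNpos : (N : ℝ) ≠ 0 := Nat.cast_ne_zero.mpr hN.ne'
  rw [integral_div, integral_finsetSum _ fun n _ ↦ (hX n).integrable one_le_two]
  simp only [hmean, sum_const, Nat.card_Icc, Nat.add_sub_cancel, nsmul_eq_mul]
  field_simp

end ProbabilityTheory

lemma cov_eq_covariance {Ω : Type*} [MeasureSpace Ω] [IsProbabilityMeasure (ℙ : Measure Ω)]
    {X Y : Ω → ℝ} (hX : MemLp X 2 ℙ) (hY : MemLp Y 2 ℙ) : cov X Y = cov[X, Y] := by
  rw [covariance_eq_sub hX hY, cov]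
  rfl

theorem stmt_5_general {Ω : Type*} [MeasureSpace Ω] [IsProbabilityMeasure (ℙ : Measure Ω)]
    (Y : ℕ → Ω → ℝ) (m C : ℝ)
    (hL2 : ∀ n, MemLp (Y n) 2 ℙ)
    (hmean : ∀ n, (∫ ω, Y n ω) = m)
    (hvar : ∀ n, cov (Y n) (Y n) ≤ C)
    (hcov : ∀ ε > 0, ∃ K : ℕ, ∀ i j : ℕ, K ≤ ((i : ℤ) - (j : ℤ)).natAbs →
      |cov (Y i) (Y j)| ≤ ε)
    (D : Ω → ℝ) (hDmeas : Measurable D) :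
    ∀ δ > 0,
      Tendsto (fun N : ℕ =>
          ℙ {ω | δ < |(((∑ n ∈ Finset.Icc 1 N, Y n ω) + D ω) / (N : ℝ)) ^ 2 - m ^ 2|})
        atTop (nhds 0) := by
  have hcov_eq : ∀ i j, cov (Y i) (Y j) = cov[Y i, Y j] :=
    fun i j ↦ cov_eq_covariance (hL2 i) (hL2 j)
  have hY : TendstoInMeasure ℙ (fun (N : ℕ) ω ↦ (∑ n ∈ Icc 1 N, Y n ω) / N) atTop
      fun _ ↦ m :=
    tendstoInMeasure_average_of_covariance_decay hL2 hmean
      (fun n ↦ by rw [← covariance_self (hL2 n).aemeasurable, ← hcov_eq]; exact hvar n)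
      (by simpa only [hcov_eq] using hcov)
  have hD : TendstoInMeasure ℙ (fun (N : ℕ) ω ↦ D ω / N) atTop fun _ ↦ 0 :=
    tendstoInMeasure_of_tendsto_ae (fun N ↦ (hDmeas.div_const _).aestronglyMeasurable)
      (ae_of_all _ fun ω ↦ tendsto_const_div_atTop_nhds_zero_nat (D ω))
  have hsq := tendstoInMeasure_iff_dist.mp
    ((hY.add hD).comp_of_continuousAt (continuous_pow 2).continuousAt)
  intro δ hδ
  refine tendsto_of_tendsto_of_tendsto_of_le_of_le tendsto_const_nhds (hsq δ hδ)
    (fun _ ↦ zero_le) fun N ↦ measure_mono fun ω hω ↦ ?_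
  simp only [Set.mem_ofPred_eq, Real.dist_eq, add_zero, ← add_div] at hω ⊢
  exact hω.le

/-- Channel hardening. If `(Y_n)` are nonnegative square-integrable
random variables with common mean `m ≥ 0`, uniformly bounded variances and
covariances vanishing with the index gap, and `D` is a nonnegative integrable
random variable, then `((Σ_{n=1}^N Y_n + D)/N)² → m²` in probability. -/
theorem stmt_5 {Ω : Type*} [MeasureSpace Ω] [IsProbabilityMeasure (ℙ : Measure Ω)]
    (Y : ℕ → Ω → ℝ) (m C : ℝ) (hm : 0 ≤ m)
    (hmeas : ∀ n, Measurable (Y n))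
    (hpos : ∀ n, ∀ ω, 0 ≤ Y n ω)
    (hL2 : ∀ n, MemLp (Y n) 2 ℙ)
    (hmean : ∀ n, (∫ ω, Y n ω) = m)
    (hvar : ∀ n, cov (Y n) (Y n) ≤ C)
    (hcov : ∀ ε > 0, ∃ K : ℕ, ∀ i j : ℕ, K ≤ ((i : ℤ) - (j : ℤ)).natAbs →
      |cov (Y i) (Y j)| ≤ ε)
    (D : Ω → ℝ) (hDmeas : Measurable D) (hDpos : ∀ ω, 0 ≤ D ω)
    (hDint : Integrable D ℙ) :
    ∀ δ > 0,
      Tendsto (fun N : ℕ =>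
          ℙ {ω | δ < |(((∑ n ∈ Finset.Icc 1 N, Y n ω) + D ω) / (N : ℝ)) ^ 2 - m ^ 2|})
        atTop (nhds 0) :=
  stmt_5_general Y m C hL2 hmean hvar hcov D hDmeas
end

section
/- Let λ > 0 and let u_1, …, u_N be any points in ℝ³ of the form u_n = (0, y_n, z_n). Then the N × N real symmetric matrix R with entries [R]_{n,m} = sinc(2‖u_n − u_m‖/λ) is positive semidefinite; that is, for every vector c ∈ ℂ^N, Σ_{n=1}^{N} Σ_{m=1}^{N} conj(c_n) c_m sinc(2‖u_n − u_m‖/λ) ≥ 0 (the sum is real and nonnegative). -/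
/-!
A sum `∑ₙ ∑ₘ c̄ₙ cₘ φ(tₙ - tₘ)` with `φ` the characteristic function of a finite measure is the
integral of `|∑ₘ cₘ e^{-i⟪w, tₘ⟫}|²`, hence nonnegative. Up to the scaling `2π/λ`, the kernel
`sinc(2‖uₙ - uₘ‖/λ)` of planar points is such a `φ`: project the uniform distribution on a unit
hemisphere orthogonally onto the array plane. The projected measure has density
`1/(2π√(1 - |w|²))` on the unit disc and is rotation invariant, and integrating out the coordinate
orthogonal to `v` leaves the uniform density `1/2` on `[-1, 1]` (Archimedes), so its
characteristic function at `v` is `½ ∫₋₁¹ e^{i‖v‖a} da = sin ‖v‖ / ‖v‖`.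
-/

open Real Finset
open scoped ComplexOrder

/-- The normalized sinc function: `sinc x = sin(π x)/(π x)` for `x ≠ 0`, `sinc 0 = 1`. -/
noncomputable def sinc (x : ℝ) : ℝ :=
  if x = 0 then 1 else Real.sin (Real.pi * x) / (Real.pi * x)

open MeasureTheory Complex ComplexConjugate
open scoped RealInnerProductSpace

lemma sinc_eq_real_sinc (x : ℝ) : _root_.sinc x = Real.sinc (π * x) := by
  simp only [_root_.sinc, Real.sinc, mul_eq_zero, pi_ne_zero, false_or]

lemma Real.sinc_abs (x : ℝ) : Real.sinc |x| = Real.sinc x := by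
  rcases abs_choice x with h | h <;> rw [h]
  exact Real.sinc_neg x

section PositiveDefinite

variable {ι E : Type*} [Fintype ι] [NormedAddCommGroup E] [InnerProductSpace ℝ E]

lemma sum_sum_conj_mul_exp_inner_sub (c : ι → ℂ) (t : ι → E) (x : E) :
    ∑ n, ∑ m, conj (c n) * c m * exp (⟪x, t n - t m⟫ * I) =
      (normSq (∑ m, c m * exp (-(⟪x, t m⟫ * I))) : ℂ) := by
  rw [normSq_eq_conj_mul_self, map_sum, sum_mul_sum]
  refine sum_congr rfl fun n _ => sum_congr rfl fun m _ => ?_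
  rw [map_mul, ← exp_conj, mul_mul_mul_comm, ← Complex.exp_add]
  simp only [inner_sub_right, map_neg, map_mul, conj_ofReal, conj_I, ofReal_sub]
  ring_nf

theorem sum_sum_conj_mul_charFun_sub_nonneg [MeasurableSpace E] [OpensMeasurableSpace E]
    (μ : Measure E) [IsFiniteMeasure μ] (c : ι → ℂ) (t : ι → E) :
    0 ≤ ∑ n, ∑ m, conj (c n) * c m * charFun μ (t n - t m) := by
  have hint (n m : ι) : Integrable (fun x => conj (c n) * c m * exp (⟪x, t n - t m⟫ * I)) μ :=
    ((BoundedContinuousFunction.innerProbChar (t n - t m)).integrable μ).const_mul _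
  calc (0 : ℂ)
      ≤ ((∫ x, normSq (∑ m, c m * exp (-(⟪x, t m⟫ * I))) ∂μ : ℝ) : ℂ) :=
        zero_le_real.2 (integral_nonneg fun _ => normSq_nonneg _)
    _ = ∫ x, (normSq (∑ m, c m * exp (-(⟪x, t m⟫ * I))) : ℂ) ∂μ := integral_ofReal.symm
    _ = ∫ x, ∑ n, ∑ m, conj (c n) * c m * exp (⟪x, t n - t m⟫ * I) ∂μ := by
        simp_rw [sum_sum_conj_mul_exp_inner_sub]
    _ = ∑ n, ∑ m, conj (c n) * c m * charFun μ (t n - t m) := by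
        rw [integral_finsetSum _ fun n _ => integrable_finsetSum _ fun m _ => hint n m]
        refine sum_congr rfl fun n _ => ?_
        rw [integral_finsetSum _ fun m _ => hint n m]
        simp_rw [integral_const_mul, charFun_apply]

end PositiveDefinite

lemma hasDerivAt_arcsin_div {c x : ℝ} (hx : x ∈ Set.Ioo (-c) c) :
    HasDerivAt (fun x => arcsin (x / c)) (√(c ^ 2 - x ^ 2))⁻¹ x := by
  obtain ⟨hlo, hhi⟩ := hx
  have hc : 0 < c := by linarith
  have hlo' : -1 < x / c := by rwa [lt_div_iff₀ hc, neg_one_mul]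
  have hhi' : x / c < 1 := by rwa [div_lt_one hc]
  refine ((hasDerivAt_arcsin hlo'.ne' hhi'.ne).comp x
    ((hasDerivAt_id x).div_const c)).congr_deriv ?_
  have hsq : 1 - (x / c) ^ 2 = (c ^ 2 - x ^ 2) / c ^ 2 := by field_simp
  rw [hsq, sqrt_div' _ (sq_nonneg c), sqrt_sq hc.le]
  field_simp

lemma integrableOn_inv_sqrt_sq_sub_sq (c : ℝ) :
    IntegrableOn (fun x => (√(c ^ 2 - x ^ 2))⁻¹) (Set.Ioo (-c) c) :=
  (intervalIntegral.integrableOn_deriv_of_nonneg (continuous_arcsin.comp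
    (continuous_id.div_const c)).continuousOn (fun _ hx => hasDerivAt_arcsin_div hx)
    (fun _ _ => by positivity)).mono_set Set.Ioo_subset_Ioc_self

lemma integral_inv_sqrt_sq_sub_sq {c : ℝ} (hc : 0 < c) :
    ∫ x in Set.Ioo (-c) c, (√(c ^ 2 - x ^ 2))⁻¹ = π := by
  have hle : -c ≤ c := by linarith
  rw [← integral_Ioc_eq_integral_Ioo, ← intervalIntegral.integral_of_le hle,
    intervalIntegral.integral_eq_sub_of_hasDerivAt_of_le hle
      (continuous_arcsin.comp (continuous_id.div_const c)).continuousOn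
      (fun _ hx => hasDerivAt_arcsin_div hx)
      ((intervalIntegrable_iff_integrableOn_Ioo_of_le hle).2 (integrableOn_inv_sqrt_sq_sub_sq c))]
  simp [neg_div, div_self hc.ne']

lemma integral_exp_mul_I_Ioo (r : ℝ) :
    ∫ a in Set.Ioo (-1 : ℝ) 1, exp (a * r * I) = 2 * Real.sinc r := by
  rw [← integral_Ioc_eq_integral_Ioo, ← intervalIntegral.integral_of_le (by norm_num)]
  rcases eq_or_ne r 0 with rfl | hr
  · norm_num [Real.sinc_zero]
  · have hr' : (r : ℂ) ≠ 0 := ofReal_ne_zero.2 hr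
    have := intervalIntegral.integral_comp_mul_right (fun t : ℝ => exp (t * I)) hr
      (a := -1) (b := 1)
    simp only [ofReal_mul] at this
    rw [this, neg_one_mul, one_mul, integral_exp_mul_I_eq_sinc, real_smul]
    push_cast
    field_simp

/-- Density, as a function of the squared radius `s`, of the orthogonal projection onto a plane of
the uniform probability measure on a unit hemisphere; for the paper's angles `(φ, θ)` this is the
law of the in-plane part `(cos θ sin φ, sin θ)` of the unit wave vector. -/
noncomputable def hemisphereProjDensity (s : ℝ) : ℝ :=
  if s < 1 then (2 * π * √(1 - s))⁻¹ else 0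

lemma hemisphereProjDensity_nonneg (s : ℝ) : 0 ≤ hemisphereProjDensity s := by
  unfold hemisphereProjDensity; split <;> positivity

@[fun_prop]
lemma measurable_hemisphereProjDensity : Measurable hemisphereProjDensity :=
  Measurable.ite measurableSet_Iio (by fun_prop) measurable_const

lemma hemisphereProjDensity_sq_add_sq (a b : ℝ) :
    hemisphereProjDensity (a ^ 2 + b ^ 2) = (2 * π)⁻¹ *
      (Set.Ioo (-√(1 - a ^ 2)) √(1 - a ^ 2)).indicator
        (fun b => (√(√(1 - a ^ 2) ^ 2 - b ^ 2))⁻¹) b := by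
  have hmem : b ∈ Set.Ioo (-√(1 - a ^ 2)) √(1 - a ^ 2) ↔ a ^ 2 + b ^ 2 < 1 := by
    rw [Set.mem_Ioo, ← abs_lt, lt_sqrt (abs_nonneg b), sq_abs]
    constructor <;> intro <;> linarith
  by_cases h : a ^ 2 + b ^ 2 < 1
  · rw [hemisphereProjDensity, if_pos h, Set.indicator_of_mem (hmem.2 h),
      sq_sqrt (by nlinarith), mul_inv, sub_sub]
  · rw [hemisphereProjDensity, if_neg h, Set.indicator_of_notMem (mt hmem.1 h), mul_zero]

lemma integrable_hemisphereProjDensity_sq_add_sq (a : ℝ) :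
    Integrable fun b => hemisphereProjDensity (a ^ 2 + b ^ 2) := by
  simp_rw [hemisphereProjDensity_sq_add_sq]
  exact ((integrable_indicator_iff measurableSet_Ioo).2
    (integrableOn_inv_sqrt_sq_sub_sq _)).const_mul _

lemma integral_hemisphereProjDensity_sq_add_sq (a : ℝ) :
    ∫ b, hemisphereProjDensity (a ^ 2 + b ^ 2) =
      (Set.Ioo (-1 : ℝ) 1).indicator (fun _ => 2⁻¹) a := by
  simp_rw [hemisphereProjDensity_sq_add_sq]
  rw [integral_const_mul, integral_indicator measurableSet_Ioo]
  by_cases ha : a ∈ Set.Ioo (-1) 1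
  · have hc : 0 < √(1 - a ^ 2) := sqrt_pos.2 (by rw [Set.mem_Ioo] at ha; nlinarith)
    rw [integral_inv_sqrt_sq_sub_sq hc, Set.indicator_of_mem ha]
    field_simp
  · have hc : √(1 - a ^ 2) = 0 := sqrt_eq_zero'.2 (by
      rw [Set.mem_Ioo, ← abs_lt, not_lt] at ha; nlinarith [sq_abs a])
    simp [hc, Set.indicator_of_notMem ha]

lemma integrable_hemisphereProjDensity_prod :
    Integrable fun p : ℝ × ℝ => hemisphereProjDensity (p.1 ^ 2 + p.2 ^ 2) := by
  rw [Measure.volume_eq_prod, integrable_prod_iff (Measurable.aestronglyMeasurable (by fun_prop))]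
  refine ⟨.of_forall integrable_hemisphereProjDensity_sq_add_sq, ?_⟩
  simp_rw [Real.norm_of_nonneg (hemisphereProjDensity_nonneg _),
    integral_hemisphereProjDensity_sq_add_sq]
  exact (integrable_indicator_iff measurableSet_Ioo).2 (integrableOn_const measure_Ioo_lt_top.ne)

lemma integral_hemisphereProjDensity_mul_exp (r : ℝ) :
    ∫ p : ℝ × ℝ, (hemisphereProjDensity (p.1 ^ 2 + p.2 ^ 2) : ℂ) * exp (p.1 * r * I) =
      Real.sinc r := by
  have hint : Integrable (fun p : ℝ × ℝ =>
      (hemisphereProjDensity (p.1 ^ 2 + p.2 ^ 2) : ℂ) * exp (p.1 * r * I)) :=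
    integrable_hemisphereProjDensity_prod.ofReal.mul_bdd (by fun_prop)
      (.of_forall fun p => by norm_cast; rw [norm_exp_ofReal_mul_I])
  rw [Measure.volume_eq_prod] at hint ⊢
  rw [integral_prod _ hint]
  dsimp only
  simp_rw [integral_mul_const, integral_complex_ofReal, integral_hemisphereProjDensity_sq_add_sq]
  have hind : (fun a : ℝ => (((Set.Ioo (-1 : ℝ) 1).indicator (fun _ => (2⁻¹ : ℝ)) a : ℝ) : ℂ) *
      exp (a * r * I)) = (Set.Ioo (-1 : ℝ) 1).indicator fun a => 2⁻¹ * exp (a * r * I) := by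
    ext a
    by_cases ha : a ∈ Set.Ioo (-1 : ℝ) 1 <;> simp [ha]
  rw [hind, integral_indicator measurableSet_Ioo, integral_const_mul, integral_exp_mul_I_Ioo]
  ring

section EuclideanPlane

local notation "ℝ²" => EuclideanSpace ℝ (Fin 2)

lemma measurePreserving_euclideanSpace_fin_two_prod :
    MeasurePreserving
      ((MeasurableEquiv.toLp 2 (Fin 2 → ℝ)).symm.trans MeasurableEquiv.finTwoArrow) :=
  (volume_preserving_finTwoArrow ℝ).comp
    (EuclideanSpace.volume_preserving_symm_measurableEquiv_toLp (Fin 2))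

lemma integral_euclideanSpace_fin_two {E : Type*} [NormedAddCommGroup E] [NormedSpace ℝ E]
    (f : ℝ × ℝ → E) : ∫ w : ℝ², f (w 0, w 1) = ∫ p, f p :=
  measurePreserving_euclideanSpace_fin_two_prod.integral_comp' f

lemma integrable_euclideanSpace_fin_two_iff {E : Type*} [NormedAddCommGroup E]
    {f : ℝ × ℝ → E} : Integrable (fun w : ℝ² => f (w 0, w 1)) ↔ Integrable f :=
  measurePreserving_euclideanSpace_fin_two_prod.integrable_comp_emb
    (MeasurableEquiv.measurableEmbedding _)

lemma norm_sq_euclideanSpace_fin_two (w : ℝ²) : ‖w‖ ^ 2 = w 0 ^ 2 + w 1 ^ 2 := by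
  rw [EuclideanSpace.real_norm_sq_eq, Fin.sum_univ_two]

noncomputable def hemisphereProjMeasure : Measure ℝ² :=
  volume.withDensity fun w => ENNReal.ofReal (hemisphereProjDensity (‖w‖ ^ 2))

instance : IsFiniteMeasure hemisphereProjMeasure :=
  isFiniteMeasure_withDensity_ofReal (by
    simp_rw [norm_sq_euclideanSpace_fin_two]
    exact (integrable_euclideanSpace_fin_two_iff.2 integrable_hemisphereProjDensity_prod).2)

lemma charFun_hemisphereProjMeasure_eq_integral (v : ℝ²) :
    charFun hemisphereProjMeasure v =
      ∫ w, (hemisphereProjDensity (‖w‖ ^ 2) : ℂ) * exp (⟪w, v⟫ * I) := by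
  rw [charFun_apply, hemisphereProjMeasure, integral_withDensity_eq_integral_toReal_smul
    (by fun_prop) (.of_forall fun _ => ENNReal.ofReal_lt_top)]
  simp_rw [ENNReal.toReal_ofReal (hemisphereProjDensity_nonneg _), real_smul]

lemma charFun_hemisphereProjMeasure_single (r : ℝ) :
    charFun hemisphereProjMeasure (EuclideanSpace.single 0 r) = Real.sinc r := by
  rw [charFun_hemisphereProjMeasure_eq_integral, ← integral_hemisphereProjDensity_mul_exp,
    ← integral_euclideanSpace_fin_two]
  simp_rw [norm_sq_euclideanSpace_fin_two, EuclideanSpace.inner_single_right, conj_trivial,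
    mul_comm r, ofReal_mul]

lemma charFun_hemisphereProjMeasure_map (e : ℝ² ≃ₗᵢ[ℝ] ℝ²) (v : ℝ²) :
    charFun hemisphereProjMeasure (e v) = charFun hemisphereProjMeasure v := by
  rw [charFun_hemisphereProjMeasure_eq_integral, charFun_hemisphereProjMeasure_eq_integral,
    ← integral_comp e]
  simp_rw [LinearIsometryEquiv.norm_map, LinearIsometryEquiv.inner_map_map]

theorem charFun_hemisphereProjMeasure (v : ℝ²) :
    charFun hemisphereProjMeasure v = Real.sinc ‖v‖ := by
  have hnorm : ‖EuclideanSpace.single (0 : Fin 2) ‖v‖‖ = ‖v‖ := by simp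
  conv_lhs => rw [← Submodule.reflection_sub hnorm]
  rw [charFun_hemisphereProjMeasure_map, charFun_hemisphereProjMeasure_single]

end EuclideanPlane

lemma norm_equiv_symm_zero_cons_sub (a b a' b' : ℝ) :
    ‖(WithLp.equiv 2 (Fin 3 → ℝ)).symm ![0, a, b] -
        (WithLp.equiv 2 (Fin 3 → ℝ)).symm ![0, a', b']‖ = ‖!₂[a, b] - !₂[a', b']‖ := by
  simp [EuclideanSpace.norm_eq, Fin.sum_univ_succ]

theorem stmt_8_general (lam : ℝ) (N : ℕ) (y z : Fin N → ℝ)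
    (u : Fin N → EuclideanSpace ℝ (Fin 3))
    (hu : ∀ n, u n = (WithLp.equiv 2 (Fin 3 → ℝ)).symm ![0, y n, z n])
    (c : Fin N → ℂ) :
    0 ≤ ∑ n : Fin N, ∑ m : Fin N,
        (starRingEnd ℂ) (c n) * c m * ((_root_.sinc (2 * ‖u n - u m‖ / lam) : ℝ) : ℂ) := by
  set p : Fin N → EuclideanSpace ℝ (Fin 2) := fun n => (2 * π / lam) • !₂[y n, z n]
  have hkernel (n m : Fin N) : ((_root_.sinc (2 * ‖u n - u m‖ / lam) : ℝ) : ℂ) =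
      charFun hemisphereProjMeasure (p n - p m) := by
    rw [charFun_hemisphereProjMeasure, ← smul_sub, norm_smul, hu, hu, norm_equiv_symm_zero_cons_sub,
      sinc_eq_real_sinc, ← Real.sinc_abs (π * _)]
    congr 2
    simp only [Real.norm_eq_abs, abs_mul, abs_div, abs_norm]
    ring
  simp_rw [hkernel]
  exact sum_sum_conj_mul_charFun_sub_nonneg _ _ _

/-- For any points `u_n = (0, y_n, z_n)` in the `x = 0` plane of `ℝ³`,
the matrix `[R]_{n,m} = sinc(2‖u_n − u_m‖/λ)` is positive semidefinite:
for every `c ∈ ℂ^N`, `Σ_n Σ_m conj(c_n) c_m sinc(2‖u_n − u_m‖/λ) ≥ 0`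
(in the complex order, i.e. the sum is real and nonnegative). -/
theorem stmt_8 (lam : ℝ) (hlam : 0 < lam) (N : ℕ) (y z : Fin N → ℝ)
    (u : Fin N → EuclideanSpace ℝ (Fin 3))
    (hu : ∀ n, u n = (WithLp.equiv 2 (Fin 3 → ℝ)).symm ![0, y n, z n])
    (c : Fin N → ℂ) :
    0 ≤ ∑ n : Fin N, ∑ m : Fin N,
        (starRingEnd ℂ) (c n) * c m * ((_root_.sinc (2 * ‖u n - u m‖ / lam) : ℝ) : ℂ) :=
  stmt_8_general lam N y z u hu c
end
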